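/- Define G₀(x) = max(0, min(1, 2x - 1/2)) and, for z ∈ [0,1], the step function T_z(x) = 1 if x ≥ z and 0 otherwise. Then C(T_z) := 2 ∫_z^1 ∫_0^z (1 - G₀(x) + G₀(y)) dy dx = 2(z·Υ(1-z) + (1-z)·Υ(z)) where Υ(z) = ∫₀ᶻ G₀(t) dt, and C(T_z) ≤ 1/8 with equality iff z ∈ [1/4, 3/4]. -/

import Mathlib

/-!
`G₀(1 - t) = 1 - G₀(t)` gives `Υ(1 - z) = 1/2 - z + Υ(z)`, which collapses `C(T_z)` to
`2(1/16 - ((z - 1/4)² - Υ(z)))`. On `[1/4, 3/4]` the primitive `Υ(z)` is exactly `(z - 1/4)²`;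
below `1/4` it vanishes and above `3/4` it is `z - 1/2 = (z - 1/4)² - (z - 3/4)²`, so the gap
`(z - 1/4)² - Υ(z)` is nonnegative and vanishes exactly on `[1/4, 3/4]`.
-/

open MeasureTheory Set

/-- The cdf of the uniform distribution on `[1/4, 3/4]`. -/
noncomputable def G₀ (x : ℝ) : ℝ := max 0 (min 1 (2 * x - 1/2))

/-- `Υ(z) = ∫₀ᶻ G₀(t) dt`. -/
noncomputable def Υ (z : ℝ) : ℝ := ∫ t in (0:ℝ)..z, G₀ t

theorem continuous_G₀ : Continuous G₀ := by
  unfold G₀; fun_prop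

theorem intervalIntegrable_G₀ (a b : ℝ) : IntervalIntegrable G₀ volume a b :=
  continuous_G₀.intervalIntegrable a b

theorem G₀_of_le {t : ℝ} (h : t ≤ 1/4) : G₀ t = 0 := by
  unfold G₀
  exact max_eq_left ((min_le_right _ _).trans (by linarith))

theorem G₀_of_mem_Icc {t : ℝ} (h : t ∈ Icc (1/4 : ℝ) (3/4)) : G₀ t = 2 * t - 1/2 := by
  unfold G₀
  rw [min_eq_right (by linarith [h.2]), max_eq_right (by linarith [h.1])]

theorem G₀_of_ge {t : ℝ} (h : 3/4 ≤ t) : G₀ t = 1 := by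
  unfold G₀
  rw [min_eq_left (by linarith), max_eq_right zero_le_one]

theorem G₀_one_sub (t : ℝ) : G₀ (1 - t) = 1 - G₀ t := by
  rcases le_total t (1/4) with h | h
  · rw [G₀_of_le h, G₀_of_ge (by linarith)]; ring
  rcases le_total t (3/4) with h' | h'
  · rw [G₀_of_mem_Icc ⟨h, h'⟩, G₀_of_mem_Icc ⟨by linarith, by linarith⟩]; ring
  · rw [G₀_of_ge h', G₀_of_le (by linarith)]; ring

theorem integral_G₀ (a b : ℝ) : ∫ t in a..b, G₀ t = Υ b - Υ a :=
  (intervalIntegral.integral_interval_sub_left (intervalIntegrable_G₀ _ _)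
    (intervalIntegrable_G₀ _ _)).symm

theorem Υ_of_le {z : ℝ} (h : z ≤ 1/4) : Υ z = 0 := by
  unfold Υ
  rw [intervalIntegral.integral_congr (g := fun _ => 0) fun t ht =>
    G₀_of_le (ht.2.trans (max_le (by norm_num) h))]
  simp

theorem Υ_of_mem_Icc {z : ℝ} (h : z ∈ Icc (1/4 : ℝ) (3/4)) : Υ z = (z - 1/4) ^ 2 := by
  have hG : ∫ t in (1/4 : ℝ)..z, G₀ t = ∫ t in (1/4 : ℝ)..z, (2 * t - 1/2) := by
    refine intervalIntegral.integral_congr fun t ht => G₀_of_mem_Icc ?_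
    rw [uIcc_of_le h.1] at ht
    exact ⟨ht.1, ht.2.trans h.2⟩
  rw [integral_G₀, Υ_of_le le_rfl, intervalIntegral.integral_sub
    ((continuous_const_mul 2).intervalIntegrable _ _) intervalIntegrable_const,
    intervalIntegral.integral_const_mul, integral_id, intervalIntegral.integral_const,
    smul_eq_mul] at hG
  linear_combination hG

theorem Υ_of_ge {z : ℝ} (h : 3/4 ≤ z) : Υ z = z - 1/2 := by
  have hG : ∫ t in (3/4 : ℝ)..z, G₀ t = ∫ _ in (3/4 : ℝ)..z, (1 : ℝ) := by
    refine intervalIntegral.integral_congr fun t ht => G₀_of_ge ?_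
    rw [uIcc_of_le h] at ht
    exact ht.1
  rw [integral_G₀, Υ_of_mem_Icc (z := 3/4) (by norm_num), intervalIntegral.integral_const,
    smul_eq_mul] at hG
  linarith

theorem Υ_one_sub (z : ℝ) : Υ (1 - z) = 1/2 - z + Υ z := by
  have hreflect : Υ (1 - z) = ∫ s in z..1, G₀ (1 - s) := by
    rw [intervalIntegral.integral_comp_sub_left G₀ 1, sub_self]; rfl
  rw [hreflect, intervalIntegral.integral_congr fun s _ => G₀_one_sub s,
    intervalIntegral.integral_sub intervalIntegrable_const (intervalIntegrable_G₀ _ _),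
    integral_G₀, Υ_of_ge (z := 1) (by norm_num), intervalIntegral.integral_const, smul_eq_mul]
  ring

theorem Υ_le_sq (z : ℝ) : Υ z ≤ (z - 1/4) ^ 2 := by
  rcases le_total z (1/4) with h | h
  · rw [Υ_of_le h]; positivity
  rcases le_total z (3/4) with h' | h'
  · rw [Υ_of_mem_Icc ⟨h, h'⟩]
  · rw [Υ_of_ge h']; nlinarith [sq_nonneg (z - 3/4)]

theorem Υ_eq_sq_iff (z : ℝ) : Υ z = (z - 1/4) ^ 2 ↔ z ∈ Icc (1/4 : ℝ) (3/4) := by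
  refine ⟨fun heq => ?_, Υ_of_mem_Icc⟩
  by_contra hz
  rcases not_and_or.mp hz with h | h <;> push Not at h
  · rw [Υ_of_le h.le] at heq
    nlinarith
  · rw [Υ_of_ge h.le] at heq
    nlinarith

theorem integral_integral_G₀_eq (z : ℝ) :
    ∫ x in z..(1:ℝ), ∫ y in (0:ℝ)..z, (1 - G₀ x + G₀ y)
      = z * Υ (1 - z) + (1 - z) * Υ z := by
  have hinner : ∀ x, ∫ y in (0:ℝ)..z, (1 - G₀ x + G₀ y) = z + Υ z - z * G₀ x := by
    intro x
    rw [intervalIntegral.integral_add intervalIntegrable_const (intervalIntegrable_G₀ _ _),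
      intervalIntegral.integral_const, smul_eq_mul, sub_zero, Υ]
    ring
  simp_rw [hinner]
  rw [intervalIntegral.integral_sub intervalIntegrable_const
      ((intervalIntegrable_G₀ _ _).const_mul _), intervalIntegral.integral_const_mul,
    integral_G₀, intervalIntegral.integral_const, smul_eq_mul, Υ_of_ge (z := 1) (by norm_num),
    Υ_one_sub]
  ring

/-- For the step function `T_z`, the quantity
`C(T_z) = 2 ∫_z^1 ∫_0^z (1 - G₀(x) + G₀(y)) dy dx` equals
`2(z·Υ(1-z) + (1-z)·Υ(z))`, and `C(T_z) ≤ 1/8` with equality iff `z ∈ [1/4, 3/4]`. -/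
theorem stmt_5 : ∀ z ∈ Icc (0:ℝ) 1,
    (2 * ∫ x in z..(1:ℝ), ∫ y in (0:ℝ)..z, (1 - G₀ x + G₀ y))
      = 2 * (z * Υ (1 - z) + (1 - z) * Υ z) ∧
    (2 * ∫ x in z..(1:ℝ), ∫ y in (0:ℝ)..z, (1 - G₀ x + G₀ y)) ≤ 1/8 ∧
    ((2 * ∫ x in z..(1:ℝ), ∫ y in (0:ℝ)..z, (1 - G₀ x + G₀ y)) = 1/8
      ↔ z ∈ Icc (1/4 : ℝ) (3/4)) := by
  intro z _
  have hC : z * Υ (1 - z) + (1 - z) * Υ z = 1/16 - ((z - 1/4) ^ 2 - Υ z) := by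
    rw [Υ_one_sub]; ring
  rw [integral_integral_G₀_eq, hC, ← Υ_eq_sq_iff]
  refine ⟨rfl, by linarith [Υ_le_sq z], ?_⟩
  constructor <;> intro h <;> linarith
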